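/- arXiv:1610.03762 — 3 statements merged into one kernel-verified Lean document; each statement's English description precedes it below -/
import Mathlib

section
/- Let k be odd and let G be the graph whose vertices are the binary k-tuples with an odd number of ones, excluding the all-ones vector, with u adjacent to v iff ⟨u,v⟩ = 1 over F₂. Then G is a regular graph on n = 2^(k−1) − 1 vertices of degree d = 2^(k−2) − 2. -/
/-- The vertices of the binary graph: binary `k`-tuples with an odd number of ones
(equivalently, summing to `1` over `F₂`), excluding the all-ones vector. -/
def BinaryVertex (k : ℕ) : Type :=
  {v : Fin k → ZMod 2 // (∑ i, v i) = 1 ∧ v ≠ fun _ => 1}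

/-- The binary graph: `u` is adjacent to `v` iff `u ≠ v` and `⟨u, v⟩ = 1` over `F₂`. -/
def binaryGraph (k : ℕ) : SimpleGraph (BinaryVertex k) where
  Adj u v := u ≠ v ∧ (∑ i, u.1 i * v.1 i) = 1
  symm := by
    constructor
    rintro u v ⟨h1, h2⟩
    refine ⟨h1.symm, ?_⟩
    calc (∑ i, v.1 i * u.1 i) = ∑ i, u.1 i * v.1 i :=
          Finset.sum_congr rfl fun i _ => mul_comm _ _
      _ = 1 := h2
  loopless := by
    constructor
    rintro v ⟨h1, -⟩
    exact h1 rfl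

/-!
Both conditions on a vertex and on its neighbours are fibres of additive maps on `𝔽₂ᵏ`:
odd weight means `∑ i, u i = 1`, and adjacency to `v` adds `v ⬝ᵥ u = 1`. A surjective additive
map has all fibres of the same size, so there are `2^(k-1)` odd-weight vectors, and, since a vertex
`v` has both a `1` and a `0` coordinate, `u ↦ (∑ i, u i, v ⬝ᵥ u)` is onto `𝔽₂²` and has fibres of
size `2^(k-2)`. For odd `k` the all-ones vector lies in the first fibre, and both `v` (as
`x * x = x` in `𝔽₂`) and the all-ones vector lie in the second; removing them gives the counts.
-/

open Finset Function

theorem AddMonoidHom.card_fiber_mul_card_of_surjective {G H : Type*} [AddGroup G] [AddMonoid H]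
    [Fintype G] [Fintype H] [DecidableEq H] (f : G →+ H) (hf : Surjective f) (y : H) :
    #{g | f g = y} * Fintype.card H = Fintype.card G := by
  calc #{g | f g = y} * Fintype.card H = ∑ z : H, #{g | f g = z} := by
        rw [sum_congr rfl fun z _ => card_fiber_eq_of_mem_range f (hf z) (hf y), sum_const,
          card_univ, smul_eq_mul, mul_comm]
    _ = Fintype.card G := (card_eq_sum_card_fiberwise fun g _ => mem_univ (f g)).symm

section FiberCount

variable {ι : Type*} [Fintype ι]

def sumHom (M : Type*) [AddCommMonoid M] : (ι → M) →+ M where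
  toFun u := ∑ i, u i
  map_zero' := by simp
  map_add' u w := by simp [sum_add_distrib]

theorem sumHom_surjective (M : Type*) [AddCommMonoid M] [DecidableEq ι] [Nonempty ι] :
    Surjective (sumHom (ι := ι) M) := fun a =>
  ⟨Pi.single (Classical.arbitrary ι) a, by simp [sumHom]⟩

theorem card_sum_eq_mul {M : Type*} [AddCommGroup M] [Fintype M] [DecidableEq M] [DecidableEq ι]
    [Nonempty ι] (a : M) :
    #{u : ι → M | ∑ i, u i = a} * Fintype.card M = Fintype.card M ^ Fintype.card ι := by
  rw [← Fintype.card_fun]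
  exact (sumHom M).card_fiber_mul_card_of_surjective (sumHom_surjective M) a

variable {R : Type*} [CommRing R]

def sumDotHom (v : ι → R) : (ι → R) →+ R × R where
  toFun u := (∑ i, u i, v ⬝ᵥ u)
  map_zero' := by simp
  map_add' u w := by simp [sum_add_distrib, dotProduct_add]

theorem sumDotHom_surjective [DecidableEq ι] {v : ι → R} {i j : ι} (hi : v i = 1) (hj : v j = 0) :
    Surjective (sumDotHom v) := by
  rintro ⟨a, b⟩
  refine ⟨Pi.single i b + Pi.single j (a - b), ?_⟩
  simp [sumDotHom, sum_add_distrib, dotProduct_add, dotProduct_single, hi, hj]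

theorem card_sum_dotProduct_eq_mul [Fintype R] [DecidableEq R] [DecidableEq ι] {v : ι → R}
    {i j : ι} (hi : v i = 1) (hj : v j = 0) (a b : R) :
    #{u : ι → R | ∑ i, u i = a ∧ v ⬝ᵥ u = b} * Fintype.card R ^ 2 =
      Fintype.card R ^ Fintype.card ι := by
  rw [← Fintype.card_fun, sq, ← Fintype.card_prod]
  convert (sumDotHom v).card_fiber_mul_card_of_surjective (sumDotHom_surjective hi hj) (a, b)
    using 3
  simp [sumDotHom]

end FiberCount

theorem ZMod.dotProduct_self_eq_sum {ι : Type*} [Fintype ι] (v : ι → ZMod 2) :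
    v ⬝ᵥ v = ∑ i, v i := by
  simp only [dotProduct, ← sq, ZMod.pow_card]

theorem ZMod.sum_fin_one_eq_one_of_odd {k : ℕ} (hk : Odd k) : ∑ _i : Fin k, (1 : ZMod 2) = 1 := by
  simpa using (ZMod.natCast_eq_one_iff_odd).mpr hk

theorem Nat.eq_pow_sub_of_mul_pow_eq {a b m n : ℕ} (hb : 0 < b) (hmn : m ≤ n)
    (h : a * b ^ m = b ^ n) : a = b ^ (n - m) := by
  rw [Nat.eq_div_of_mul_eq_left (by positivity) h, Nat.pow_div hmn hb]

namespace BinaryVertex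

variable {k : ℕ}

theorem exists_apply_eq_one_and_apply_eq_zero (v : BinaryVertex k) :
    ∃ i j, v.1 i = 1 ∧ v.1 j = 0 := by
  have eq_one_of_ne_zero : ∀ x : ZMod 2, x ≠ 0 → x = 1 := by decide
  obtain ⟨hsum, hne⟩ := v.2
  obtain ⟨i, -, hi⟩ := exists_ne_zero_of_sum_ne_zero (hsum ▸ one_ne_zero)
  obtain ⟨j, hj⟩ := Function.ne_iff.mp hne
  exact ⟨i, j, eq_one_of_ne_zero _ hi, by simpa using mt (eq_one_of_ne_zero _) hj⟩

theorem card_of_odd (hk : Odd k) : Nat.card (BinaryVertex k) = 2 ^ (k - 1) - 1 := by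
  have : Nonempty (Fin k) := ⟨⟨0, hk.pos⟩⟩
  have hfiber : #{u : Fin k → ZMod 2 | ∑ i, u i = 1} = 2 ^ (k - 1) := by
    have h := card_sum_eq_mul (ι := Fin k) (1 : ZMod 2)
    rw [ZMod.card, Fintype.card_fin] at h
    exact Nat.eq_pow_sub_of_mul_pow_eq two_pos hk.pos (by rwa [pow_one])
  have hones : (fun _ => 1) ∈ ({u : Fin k → ZMod 2 | ∑ i, u i = 1} : Finset _) := by
    simpa using ZMod.sum_fin_one_eq_one_of_odd hk
  rw [BinaryVertex, Nat.card_eq_fintype_card, Fintype.card_subtype, ← filter_filter, filter_ne',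
    card_erase_of_mem hones, hfiber]

theorem image_val_neighborSet (v : BinaryVertex k) :
    Subtype.val '' (binaryGraph k).neighborSet v =
      {u | (∑ i, u i = 1 ∧ v.1 ⬝ᵥ u = 1) ∧ u ≠ v.1 ∧ u ≠ fun _ => 1} := by
  ext u
  constructor
  · rintro ⟨w, ⟨hne, hdot⟩, rfl⟩
    exact ⟨⟨w.2.1, hdot⟩, fun h => hne (Subtype.ext h).symm, w.2.2⟩
  · rintro ⟨⟨hsum, hdot⟩, hv, hones⟩
    exact ⟨⟨u, hsum, hones⟩, ⟨fun h => hv (congrArg Subtype.val h).symm, hdot⟩, rfl⟩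

theorem card_neighborSet_of_odd (hk : Odd k) (v : BinaryVertex k) :
    Nat.card ((binaryGraph k).neighborSet v) = 2 ^ (k - 2) - 2 := by
  obtain ⟨i, j, hi, hj⟩ := v.exists_apply_eq_one_and_apply_eq_zero
  have hk2 : 2 ≤ k := by
    have hij : i ≠ j := by rintro rfl; exact one_ne_zero (hi.symm.trans hj)
    have := Fin.val_ne_of_ne hij
    omega
  set fiber : Finset (Fin k → ZMod 2) := {u | ∑ i, u i = 1 ∧ v.1 ⬝ᵥ u = 1}
  have hfiber : #fiber = 2 ^ (k - 2) := by
    have h := card_sum_dotProduct_eq_mul hi hj 1 1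
    rw [ZMod.card, Fintype.card_fin] at h
    exact Nat.eq_pow_sub_of_mul_pow_eq two_pos hk2 h
  have hsub : {v.1, fun _ => 1} ⊆ fiber := by
    simp [fiber, insert_subset_iff, ZMod.dotProduct_self_eq_sum, v.2.1, ZMod.sum_fin_one_eq_one_of_odd hk,
      ← Pi.one_def, dotProduct_one]
  have himage : Subtype.val '' (binaryGraph k).neighborSet v = ↑(fiber \ {v.1, fun _ => 1}) := by
    rw [image_val_neighborSet]
    ext u
    simp [fiber]
  calc Nat.card ((binaryGraph k).neighborSet v)
      = Nat.card (Subtype.val '' (binaryGraph k).neighborSet v) :=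
        (Nat.card_image_of_injective Subtype.val_injective _).symm
    _ = #fiber - 2 := by
      rw [himage, Nat.card_coe_set_eq, Set.ncard_coe_finset, card_sdiff_of_subset hsub,
        card_pair v.2.2]
    _ = 2 ^ (k - 2) - 2 := by rw [hfiber]

end BinaryVertex

/-- For odd `k`, the binary graph has `n = 2^(k−1) − 1` vertices and is
regular of degree `d = 2^(k−2) − 2`. -/
theorem binaryGraph_card_and_regular (k : ℕ) (hk : Odd k) :
    Nat.card (BinaryVertex k) = 2 ^ (k - 1) - 1 ∧
    ∀ v : BinaryVertex k, Nat.card ((binaryGraph k).neighborSet v) = 2 ^ (k - 2) - 2 :=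
  ⟨BinaryVertex.card_of_odd hk, BinaryVertex.card_neighborSet_of_odd hk⟩
end

section
/- Let G be a graph on n vertices whose adjacency matrix is (a_{uv}), and for ξ ∈ {0,1} and B ⊆ [n] let N_v^{B,ξ} = |{u ∈ B : a_{uv} = ξ}| (with a_{vv} = 0). Suppose that for some constants C > 0 and δ ∈ (0,1): every vertex degree lies within 3C n^δ of n/2, and for every pair of distinct vertices u ≠ u' and every ξ, ξ' ∈ {0,1}, the number |N_u^ξ ∩ N_{u'}^{ξ'}| lies within 3C n^δ of n/4. Then, with v chosen uniformly at random from [n], Var(N_v^{B,ξ}) ≤ |B|/4 + C̄ |B|² n^{δ−1} for a constant C̄ depending only on C. -/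
/-- The generalized neighborhood: `genNbhd G ξ v` is the set of vertices `u` with
`a_{uv} = ξ`, where `a` is the adjacency indicator (so `a_{vv} = 0`); for `ξ = true`
these are the neighbors of `v`, and for `ξ = false` the non-neighbors (including `v`). -/
def genNbhd {n : ℕ} (G : SimpleGraph (Fin n)) [DecidableRel G.Adj] (ξ : Bool)
    (v : Fin n) : Finset (Fin n) :=
  Finset.univ.filter fun u => decide (G.Adj u v) = ξ

/-- Suppose every degree of `G` is within `3C n^δ` of `n/2` and every
generalized co-degree `|N_u^ξ ∩ N_{u'}^{ξ'}|` (for `u ≠ u'`) is within `3C n^δ` of `n/4`.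
Then, for a vertex `v` chosen uniformly at random from `[n]`, the variance of
`N_v^{B,ξ} = |{u ∈ B : a_{uv} = ξ}|` is at most `|B|/4 + C̄ |B|² n^(δ−1)`, where the
constant `C̄` depends only on `C`. -/
theorem variance_genNbhd_le (C : ℝ) (hC : 0 < C) :
    ∃ Cbar : ℝ, ∀ (n : ℕ) (G : SimpleGraph (Fin n)) [DecidableRel G.Adj] (δ : ℝ),
      0 < δ → δ < 1 →
      (∀ v : Fin n, |(G.degree v : ℝ) - n / 2| ≤ 3 * C * (n : ℝ) ^ δ) →
      (∀ u u' : Fin n, u ≠ u' → ∀ ξ ξ' : Bool,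
        |((genNbhd G ξ u ∩ genNbhd G ξ' u').card : ℝ) - n / 4| ≤ 3 * C * (n : ℝ) ^ δ) →
      ∀ (B : Finset (Fin n)) (ξ : Bool),
        (∑ v : Fin n, (((B ∩ genNbhd G ξ v).card : ℝ)) ^ 2) / n -
            ((∑ v : Fin n, ((B ∩ genNbhd G ξ v).card : ℝ)) / n) ^ 2 ≤
          (B.card : ℝ) / 4 + Cbar * (B.card : ℝ) ^ 2 * (n : ℝ) ^ (δ - 1) := by
  refine ⟨9 * C, ?_⟩
  intro n G _ δ hδ0 hδ1 hdeg hcodeg B ξ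
  by_cases hB : B = ∅
  · subst hB; simp
  have hBne : B.Nonempty := Finset.nonempty_of_ne_empty hB
  have hBpos : (1:ℝ) ≤ B.card := by exact_mod_cast Finset.card_pos.mpr hBne
  obtain ⟨u0, -⟩ := hBne
  have hn' : (0:ℝ) < n := by exact_mod_cast u0.pos
  set x : ℝ := 3 * C * (n:ℝ) ^ δ with hxdef
  have hx0 : 0 ≤ x := by positivity
  set g : Fin n → Fin n → ℝ := fun u v => if v ∈ genNbhd G ξ u then 1 else 0 with hg
  -- pointwise count
  have hN : ∀ v : Fin n, ((B ∩ genNbhd G ξ v).card : ℝ) = ∑ u ∈ B, g u v := by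
    intro v
    have h1 : B ∩ genNbhd G ξ v = B.filter (fun u => v ∈ genNbhd G ξ u) := by
      ext u
      simp [genNbhd, Finset.mem_inter, Finset.mem_filter, G.adj_comm]
    rw [h1, Finset.card_filter]
    push_cast
    simp [hg]
  -- codegree sums
  have hCsum : ∀ u u' : Fin n,
      ∑ v : Fin n, g u v * g u' v = ((genNbhd G ξ u ∩ genNbhd G ξ u').card : ℝ) := by
    intro u u'
    have h1 : ∀ v, g u v * g u' v
        = if v ∈ genNbhd G ξ u ∩ genNbhd G ξ u' then (1:ℝ) else 0 := by
      intro v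
      by_cases h1 : v ∈ genNbhd G ξ u <;> by_cases h2 : v ∈ genNbhd G ξ u' <;>
        simp [hg, h1, h2, Finset.mem_inter]
    simp only [h1]
    rw [Finset.sum_boole, Finset.filter_mem_eq_inter, Finset.univ_inter]
  have hS1 : ∑ v : Fin n, ((B ∩ genNbhd G ξ v).card : ℝ)^2
      = ∑ u ∈ B, ∑ u' ∈ B, ((genNbhd G ξ u ∩ genNbhd G ξ u').card : ℝ) := by
    simp only [hN]
    calc ∑ v : Fin n, (∑ u ∈ B, g u v)^2
        = ∑ v : Fin n, ∑ u ∈ B, ∑ u' ∈ B, g u v * g u' v := by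
          refine Finset.sum_congr rfl fun v _ => ?_
          rw [sq, Finset.sum_mul_sum]
      _ = ∑ u ∈ B, ∑ u' ∈ B, ∑ v : Fin n, g u v * g u' v := by
          rw [Finset.sum_comm]
          exact Finset.sum_congr rfl fun u _ => Finset.sum_comm
      _ = _ := Finset.sum_congr rfl fun u _ => Finset.sum_congr rfl fun u' _ => hCsum u u'
  have hS0 : ∑ v : Fin n, ((B ∩ genNbhd G ξ v).card : ℝ)
      = ∑ u ∈ B, ((genNbhd G ξ u).card : ℝ) := by
    simp only [hN]
    rw [Finset.sum_comm]
    refine Finset.sum_congr rfl fun u _ => ?_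
    simp [hg, Finset.sum_boole, Finset.filter_mem_eq_inter]
  -- size bound
  have hsize : ∀ u : Fin n, |((genNbhd G ξ u).card : ℝ) - n / 2| ≤ x := by
    intro u
    have htrue : genNbhd G true u = G.neighborFinset u := by
      ext v
      simp [genNbhd, SimpleGraph.mem_neighborFinset, G.adj_comm]
    have hsum : (genNbhd G true u).card + (genNbhd G false u).card = n := by
      classical
      have := Finset.card_filter_add_card_filter_not
        (s := (Finset.univ : Finset (Fin n))) (p := fun v => decide (G.Adj v u) = true)
      simpa [genNbhd, Finset.card_univ] using this
    cases ξ
    · have h1 : ((genNbhd G false u).card : ℝ) = n - G.degree u := by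
        have : ((genNbhd G true u).card : ℝ) + ((genNbhd G false u).card : ℝ) = n := by
          exact_mod_cast hsum
        rw [htrue, SimpleGraph.card_neighborFinset_eq_degree] at this
        linarith
      rw [h1]
      have heq : (n:ℝ) - (G.degree u : ℝ) - (n:ℝ)/2 = -((G.degree u : ℝ) - (n:ℝ)/2) := by
        ring
      rw [heq, abs_neg]
      exact hdeg u
    · rw [htrue, SimpleGraph.card_neighborFinset_eq_degree]
      exact hdeg u
  set bc : ℝ := (B.card : ℝ) with hbc
  set S1 : ℝ := ∑ v : Fin n, ((B ∩ genNbhd G ξ v).card : ℝ)^2 with hS1d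
  set S0 : ℝ := ∑ v : Fin n, ((B ∩ genNbhd G ξ v).card : ℝ) with hS0d
  have H1 : S1 ≤ bc^2 * ((n:ℝ)/4 + x) + bc * ((n:ℝ)/4) := by
    rw [hS1]
    have hbound : ∀ u ∈ B, ∀ u' ∈ B,
        ((genNbhd G ξ u ∩ genNbhd G ξ u').card : ℝ)
          ≤ (n:ℝ)/4 + x + (if u = u' then (n:ℝ)/4 else 0) := by
      intro u _ u' _
      by_cases h : u = u'
      · subst h
        rw [Finset.inter_self, if_pos rfl]
        have := abs_le.mp (hsize u)
        linarith [this.2]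
      · simp only [if_neg h]
        have := abs_le.mp (hcodeg u u' h ξ ξ)
        linarith [this.2]
    calc ∑ u ∈ B, ∑ u' ∈ B, ((genNbhd G ξ u ∩ genNbhd G ξ u').card : ℝ)
        ≤ ∑ u ∈ B, ∑ u' ∈ B, ((n:ℝ)/4 + x + (if u = u' then (n:ℝ)/4 else 0)) := by
          refine Finset.sum_le_sum fun u hu => Finset.sum_le_sum fun u' hu' => ?_
          exact hbound u hu u' hu'
      _ = bc^2 * ((n:ℝ)/4 + x) + bc * ((n:ℝ)/4) := by
          have hinner : ∀ u ∈ B, ∑ u' ∈ B, ((n:ℝ)/4 + x + (if u = u' then (n:ℝ)/4 else 0))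
              = bc * ((n:ℝ)/4 + x) + (n:ℝ)/4 := by
            intro u hu
            rw [Finset.sum_add_distrib, Finset.sum_const, Finset.sum_ite_eq, if_pos hu, hbc,
              nsmul_eq_mul]
          rw [Finset.sum_congr rfl hinner, Finset.sum_const, nsmul_eq_mul, hbc]
          ring
  have H2 : |S0 - bc * ((n:ℝ)/2)| ≤ bc * x := by
    rw [hS0]
    have heq : (∑ u ∈ B, ((genNbhd G ξ u).card : ℝ)) - bc * ((n:ℝ)/2)
        = ∑ u ∈ B, (((genNbhd G ξ u).card : ℝ) - (n:ℝ)/2) := by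
      rw [Finset.sum_sub_distrib, Finset.sum_const, hbc]
      push_cast; ring
    rw [heq]
    calc |∑ u ∈ B, (((genNbhd G ξ u).card : ℝ) - (n:ℝ)/2)|
        ≤ ∑ u ∈ B, |((genNbhd G ξ u).card : ℝ) - (n:ℝ)/2| :=
          Finset.abs_sum_le_sum_abs _ _
      _ ≤ ∑ u ∈ B, x := Finset.sum_le_sum fun u _ => hsize u
      _ = bc * x := by rw [Finset.sum_const, hbc]; push_cast; ring
  -- arithmetic
  have e1 : S1 / n ≤ bc^2/4 + bc^2 * (x/n) + bc/4 := by
    rw [div_le_iff₀ hn']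
    have : (bc^2/4 + bc^2 * (x/n) + bc/4) * n = bc^2 * ((n:ℝ)/4 + x) + bc * ((n:ℝ)/4) := by
      field_simp
    rw [this]; exact H1
  have h2' : |S0/n - bc/2| ≤ bc * x / n := by
    have heq : S0/n - bc/2 = (S0 - bc * ((n:ℝ)/2))/n := by field_simp
    rw [heq, abs_div, abs_of_pos hn']
    exact (div_le_div_iff_of_pos_right hn').mpr H2
  have e2 : bc^2/4 - bc^2 * (x/n) ≤ (S0/n)^2 := by
    obtain ⟨ha, hb⟩ := abs_le.mp h2'
    have hbc0 : (0:ℝ) ≤ bc := by linarith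
    have hy : (0:ℝ) ≤ S0/(n:ℝ) - bc/2 + bc*x/(n:ℝ) := by linarith
    have key : (S0/(n:ℝ))^2 - (bc^2/4 - bc^2*(x/(n:ℝ)))
        = (S0/(n:ℝ)-bc/2)^2 + bc*(S0/(n:ℝ)-bc/2+bc*x/(n:ℝ)) := by ring
    linarith [sq_nonneg (S0/(n:ℝ) - bc/2), mul_nonneg hbc0 hy, key]
  have hxn : x/n = 3*C*(n:ℝ)^(δ-1) := by
    rw [hxdef, Real.rpow_sub hn', Real.rpow_one]; ring
  have hfin : 2 * (bc^2 * (x/n)) ≤ 9*C * bc^2 * (n:ℝ)^(δ-1) := by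
    rw [hxn]
    have hp : 0 ≤ C * (bc^2 * (n:ℝ)^(δ-1)) := by positivity
    calc 2*(bc^2*(3*C*(n:ℝ)^(δ-1))) = 6*(C*(bc^2*(n:ℝ)^(δ-1))) := by ring
      _ ≤ 9*(C*(bc^2*(n:ℝ)^(δ-1))) := by linarith
      _ = 9*C*bc^2*(n:ℝ)^(δ-1) := by ring
  calc S1/n - (S0/n)^2 ≤ bc^2/4 + bc^2*(x/n) + bc/4 - (bc^2/4 - bc^2*(x/n)) := by
        linarith
    _ = bc/4 + 2*(bc^2*(x/n)) := by ring
    _ ≤ bc/4 + 9*C*bc^2*(n:ℝ)^(δ-1) := by linarith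
end

section
/- Let (Z, Z_ρ) be a standard bivariate normal pair with correlation ρ ∈ (−1, 1), and set Φ̄(h,h,ρ) = P(Z ≥ h, Z_ρ ≥ h). Then Φ̄(h,h,ρ) = 2Φ(−h)Φ(−θh) − Φ̄(θh, θh, −ρ), where θ = √((1−ρ)/(1+ρ)) and Φ is the standard normal CDF. -/
open MeasureTheory ProbabilityTheory Set
open scoped ENNReal NNReal Real

noncomputable def G2 : ℝ × ℝ → ℝ≥0∞ := fun p => gaussianPDF 0 1 p.1 * gaussianPDF 0 1 p.2

lemma G2_measurable : Measurable G2 :=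
  ((measurable_gaussianPDF 0 1).comp measurable_fst).mul
    ((measurable_gaussianPDF 0 1).comp measurable_snd)

lemma prod_gaussian_eq_withDensity :
    (gaussianReal 0 1).prod (gaussianReal 0 1) = (volume : Measure (ℝ × ℝ)).withDensity G2 := by
  refine Measure.prod_eq fun s t hs ht => ?_
  rw [withDensity_apply _ (hs.prod ht), Measure.volume_eq_prod, ← Measure.prod_restrict]
  rw [show (fun p : ℝ × ℝ => G2 p) = fun p => gaussianPDF 0 1 p.1 * gaussianPDF 0 1 p.2 from rfl]
  rw [lintegral_prod_mul (measurable_gaussianPDF 0 1).aemeasurable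
      (measurable_gaussianPDF 0 1).aemeasurable,
    gaussianReal_apply 0 one_ne_zero, gaussianReal_apply 0 one_ne_zero]

lemma G2_rot (x y x' y' : ℝ) (hxy : x'^2 + y'^2 = x^2 + y^2) :
    G2 (x', y') = G2 (x, y) := by
  simp only [G2, gaussianPDF]
  rw [← ENNReal.ofReal_mul (gaussianPDFReal_nonneg _ _ _),
    ← ENNReal.ofReal_mul (gaussianPDFReal_nonneg _ _ _)]
  congr 1
  simp only [gaussianPDFReal]
  rw [mul_mul_mul_comm, ← Real.exp_add, mul_mul_mul_comm ((√(2 * π * ((1:ℝ≥0):ℝ)))⁻¹), ← Real.exp_add]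
  congr 1
  rw [Real.exp_eq_exp]
  push_cast
  ring_nf
  linarith [hxy]

lemma volume_map_lin (a b c d : ℝ) (h1 : a^2 + c^2 = 1) (h2 : b^2 + d^2 = 1)
    (h3 : a*b + c*d = 0) :
    Measure.map (fun p : ℝ × ℝ => (a*p.1 + b*p.2, c*p.1 + d*p.2)) volume = volume := by
  have hdet2 : (a*d - b*c)^2 = 1 := by
    linear_combination (b^2 + d^2) * h1 + h2 - (a*b + c*d) * h3
  have hdet : a*d - b*c = 1 ∨ a*d - b*c = -1 := by
    have hz : (a*d - b*c - 1) * (a*d - b*c + 1) = 0 := by linear_combination hdet2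
    rcases mul_eq_zero.mp hz with hz | hz
    · left; linarith
    · right; linarith
  have hfun : (fun p : ℝ × ℝ => (a*p.1 + b*p.2, c*p.1 + d*p.2))
      = ⇑(Matrix.toLin (Module.Basis.finTwoProd ℝ) (Module.Basis.finTwoProd ℝ) !![a, b; c, d]) := by
    funext p
    rw [Matrix.toLin_finTwoProd_apply]
  have hdne : LinearMap.det (Matrix.toLin (Module.Basis.finTwoProd ℝ) (Module.Basis.finTwoProd ℝ)
      !![a, b; c, d]) ≠ 0 := by
    rw [LinearMap.det_toLin, Matrix.det_fin_two_of]
    rcases hdet with hd | hd <;> rw [hd] <;> norm_num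
  rw [hfun, Measure.map_linearMap_addHaar_eq_smul_addHaar volume hdne,
    LinearMap.det_toLin, Matrix.det_fin_two_of]
  rcases hdet with hd | hd <;> rw [hd] <;> norm_num

lemma rot_inv (a b c d : ℝ) (h1 : a^2 + c^2 = 1) (h2 : b^2 + d^2 = 1)
    (h3 : a*b + c*d = 0) {A : Set (ℝ × ℝ)} (hA : MeasurableSet A) :
    ((gaussianReal 0 1).prod (gaussianReal 0 1))
        ((fun p : ℝ × ℝ => (a*p.1 + b*p.2, c*p.1 + d*p.2)) ⁻¹' A)
      = ((gaussianReal 0 1).prod (gaussianReal 0 1)) A := by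
  set f := fun p : ℝ × ℝ => (a*p.1 + b*p.2, c*p.1 + d*p.2) with hf
  have hfm : Measurable f := by fun_prop
  have hGf : ∀ p : ℝ × ℝ, G2 (f p) = G2 p := by
    rintro ⟨x, y⟩
    exact G2_rot x y _ _ (by linear_combination x^2 * h1 + y^2 * h2 + (2*x*y) * h3)
  rw [prod_gaussian_eq_withDensity, withDensity_apply _ (hfm hA), withDensity_apply _ hA,
    ← lintegral_indicator (hfm hA), ← lintegral_indicator hA]
  have hcomp : ∀ p, (f ⁻¹' A).indicator G2 p = A.indicator G2 (f p) := by
    intro p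
    by_cases hp : p ∈ f ⁻¹' A
    · rw [Set.indicator_of_mem (show f p ∈ A from hp), Set.indicator_of_mem hp, hGf]
    · rw [Set.indicator_of_notMem (show f p ∉ A from hp), Set.indicator_of_notMem hp]
  calc ∫⁻ p, (f ⁻¹' A).indicator G2 p = ∫⁻ p, A.indicator G2 (f p) := by
        exact lintegral_congr hcomp
    _ = ∫⁻ q, A.indicator G2 q ∂(Measure.map f volume) :=
        (lintegral_map (G2_measurable.indicator hA) hfm).symm
    _ = ∫⁻ q, A.indicator G2 q := by rw [hf, volume_map_lin a b c d h1 h2 h3]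

lemma gauss_Ici_eq (t : ℝ) : gaussianReal 0 1 (Set.Ici t) = gaussianReal 0 1 (Set.Iic (-t)) := by
  have hmap : (gaussianReal 0 1).map (fun x : ℝ => (-1) * x) = gaussianReal 0 1 := by
    rw [gaussianReal_map_const_mul]
    norm_num
  conv_lhs => rw [← hmap]
  rw [Measure.map_apply (by fun_prop) measurableSet_Ici]
  congr 1
  ext x
  simp only [Set.mem_preimage, Set.mem_Ici, Set.mem_Iic]
  constructor <;> intro hx <;> linarith

lemma null_y0 : ((gaussianReal 0 1).prod (gaussianReal 0 1)) {p : ℝ × ℝ | p.2 = 0} = 0 := by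
  have hset : {p : ℝ × ℝ | p.2 = 0} = (Set.univ : Set ℝ) ×ˢ ({0} : Set ℝ) := by
    ext ⟨x, y⟩; simp [eq_comm]
  rw [hset, Measure.prod_prod]
  have h0 : gaussianReal 0 1 ({0} : Set ℝ) = 0 :=
    gaussianReal_absolutelyContinuous 0 one_ne_zero (measure_singleton 0)
  simp [h0]

lemma ms2 {u v : ℝ} {f g : ℝ × ℝ → ℝ} (hf : Measurable f) (hg : Measurable g) :
    MeasurableSet {p : ℝ × ℝ | u ≤ f p ∧ v ≤ g p} :=
  (measurableSet_le measurable_const hf).inter (measurableSet_le measurable_const hg)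

set_option maxHeartbeats 2000000 in
/-- Let `(Z, Z_ρ)` be a standard bivariate normal pair with correlation
`ρ ∈ (−1,1)`, realized as `Z = z`, `Z_r = r·z + √(1−r²)·w` with `z, w` independent
standard normals. With `Φ̄(h,h,r) = P(Z ≥ h, Z_r ≥ h)` and `Φ` the standard normal CDF,
`Φ̄(h,h,ρ) = 2Φ(−h)Φ(−θh) − Φ̄(θh,θh,−ρ)` where `θ = √((1−ρ)/(1+ρ))`. -/
theorem bivariate_normal_tail_identity (ρ h : ℝ) (hρ0 : -1 < ρ) (hρ1 : ρ < 1) :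
    let μ2 : Measure (ℝ × ℝ) := (gaussianReal 0 1).prod (gaussianReal 0 1)
    let Φ : ℝ → ℝ := fun x => ((gaussianReal 0 1) (Set.Iic x)).toReal
    let Fbar : ℝ → ℝ → ℝ := fun a r =>
      (μ2 {zw : ℝ × ℝ | a ≤ zw.1 ∧ a ≤ r * zw.1 + Real.sqrt (1 - r ^ 2) * zw.2}).toReal
    let θ : ℝ := Real.sqrt ((1 - ρ) / (1 + ρ))
    Fbar h ρ = 2 * Φ (-h) * Φ (-(θ * h)) - Fbar (θ * h) (-ρ) := by
  intro μ2 Φ Fbar θ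
  have hμ2def : μ2 = (gaussianReal 0 1).prod (gaussianReal 0 1) := rfl
  have hθdef : θ = Real.sqrt ((1 - ρ) / (1 + ρ)) := rfl
  set c : ℝ := Real.sqrt ((1 + ρ) / 2) with hcdef
  set s : ℝ := Real.sqrt ((1 - ρ) / 2) with hsdef
  have hc2 : c ^ 2 = (1 + ρ) / 2 := Real.sq_sqrt (by linarith)
  have hs2 : s ^ 2 = (1 - ρ) / 2 := Real.sq_sqrt (by linarith)
  have hcpos : 0 < c := Real.sqrt_pos.mpr (by linarith)
  have hspos : 0 < s := Real.sqrt_pos.mpr (by linarith)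
  have hcs1 : c ^ 2 + s ^ 2 = 1 := by rw [hc2, hs2]; ring
  have hts : Real.sqrt (1 - ρ ^ 2) = 2 * c * s := by
    rw [show (1 : ℝ) - ρ ^ 2 = (2 * c * s) ^ 2 by
      rw [mul_pow, mul_pow, hc2, hs2]; ring]
    exact Real.sqrt_sq (by positivity)
  have hθ : θ = s / c := by
    rw [hθdef, show (1 - ρ) / (1 + ρ) = (s / c) ^ 2 by
      rw [div_pow, hs2, hc2]
      rw [div_div_div_comm]
      norm_num]
    exact Real.sqrt_sq (by positivity)
  have hθc : θ * c = s := by rw [hθ]; field_simp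
  -- the sets
  set E1 : Set (ℝ × ℝ) :=
    {zw : ℝ × ℝ | h ≤ zw.1 ∧ h ≤ ρ * zw.1 + Real.sqrt (1 - ρ ^ 2) * zw.2} with hE1
  set E2 : Set (ℝ × ℝ) :=
    {zw : ℝ × ℝ | θ * h ≤ zw.1 ∧ θ * h ≤ -ρ * zw.1 + Real.sqrt (1 - (-ρ) ^ 2) * zw.2} with hE2
  set A : Set (ℝ × ℝ) := {p : ℝ × ℝ | h ≤ c * p.1 + s * p.2 ∧ h ≤ c * p.1 - s * p.2} with hA
  set B : Set (ℝ × ℝ) :=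
    {p : ℝ × ℝ | θ * h ≤ s * p.1 + c * p.2 ∧ θ * h ≤ s * p.1 - c * p.2} with hB
  set Ap : Set (ℝ × ℝ) := {p : ℝ × ℝ | h ≤ c * p.1 - s * p.2 ∧ 0 ≤ p.2} with hAp
  set Bm : Set (ℝ × ℝ) := {p : ℝ × ℝ | θ * h ≤ s * p.1 + c * p.2 ∧ p.2 ≤ 0} with hBm
  set Q : Set (ℝ × ℝ) := {p : ℝ × ℝ | h ≤ p.1 ∧ θ * h ≤ p.2} with hQ
  have mE1 : MeasurableSet E1 := ms2 (by fun_prop) (by fun_prop)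
  have mE2 : MeasurableSet E2 := ms2 (by fun_prop) (by fun_prop)
  have mA : MeasurableSet A := ms2 (by fun_prop) (by fun_prop)
  have mB : MeasurableSet B := ms2 (by fun_prop) (by fun_prop)
  have mAp : MeasurableSet Ap :=
    (measurableSet_le measurable_const
        (by fun_prop : Measurable fun p : ℝ × ℝ => c * p.1 - s * p.2)).inter
      (measurableSet_le measurable_const
        (by fun_prop : Measurable fun p : ℝ × ℝ => p.2))
  have mBm : MeasurableSet Bm :=
    (measurableSet_le measurable_const
        (by fun_prop : Measurable fun p : ℝ × ℝ => s * p.1 + c * p.2)).inter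
      (measurableSet_le (by fun_prop : Measurable fun p : ℝ × ℝ => p.2) measurable_const)
  have mQ : MeasurableSet Q := ms2 (by fun_prop) (by fun_prop)
  -- step 1 : μ2 E1 = μ2 A
  have step1 : μ2 E1 = μ2 A := by
    have hrot := rot_inv c s s (-c) (by linarith) (by nlinarith) (by ring) mE1
    have hset : (fun p : ℝ × ℝ => (c * p.1 + s * p.2, s * p.1 + -c * p.2)) ⁻¹' E1 = A := by
      ext ⟨x, y⟩
      simp only [hE1, hA, Set.mem_preimage, Set.mem_setOf_eq]
      have key : ρ * (c * x + s * y) + Real.sqrt (1 - ρ ^ 2) * (s * x + -c * y)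
          = c * x - s * y := by
        rw [hts]; linear_combination (2 * c * x) * hs2 - (2 * s * y) * hc2
      rw [key]
    show (gaussianReal 0 1).prod (gaussianReal 0 1) E1 = (gaussianReal 0 1).prod (gaussianReal 0 1) A
    rw [← hrot, hset]
  -- step 2 : μ2 E2 = μ2 B
  have step2 : μ2 E2 = μ2 B := by
    have hrot := rot_inv s c c (-s) (by linarith) (by nlinarith) (by ring) mE2
    have hset : (fun p : ℝ × ℝ => (s * p.1 + c * p.2, c * p.1 + -s * p.2)) ⁻¹' E2 = B := by
      ext ⟨x, y⟩
      simp only [hE2, hB, Set.mem_preimage, Set.mem_setOf_eq]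
      have hneg : (1 : ℝ) - (-ρ) ^ 2 = 1 - ρ ^ 2 := by ring
      have key : -ρ * (s * x + c * y) + Real.sqrt (1 - (-ρ) ^ 2) * (c * x + -s * y)
          = s * x - c * y := by
        rw [hneg, hts]; linear_combination (2 * s * x) * hc2 - (2 * c * y) * hs2
      rw [key]
    show (gaussianReal 0 1).prod (gaussianReal 0 1) E2 = (gaussianReal 0 1).prod (gaussianReal 0 1) B
    rw [← hrot, hset]
  -- step 3 : μ2 A = μ2 Ap + μ2 Ap
  have m2 : MeasurableSet {p : ℝ × ℝ | p.2 ≤ 0} :=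
    measurableSet_le (by fun_prop : Measurable fun p : ℝ × ℝ => p.2) measurable_const
  have m2' : MeasurableSet {p : ℝ × ℝ | 0 ≤ p.2} :=
    measurableSet_le measurable_const (by fun_prop : Measurable fun p : ℝ × ℝ => p.2)
  have hApA : A ∩ {p : ℝ × ℝ | 0 ≤ p.2} = Ap := by
    ext ⟨x, y⟩
    simp only [hAp, hA, Set.mem_inter_iff, Set.mem_setOf_eq]
    constructor
    · rintro ⟨⟨_, h1⟩, hy⟩; exact ⟨h1, hy⟩
    · rintro ⟨h1, hy⟩
      refine ⟨⟨?_, h1⟩, hy⟩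
      nlinarith [mul_nonneg hspos.le hy]
  have hBmB : B ∩ {p : ℝ × ℝ | p.2 ≤ 0} = Bm := by
    ext ⟨x, y⟩
    simp only [hBm, hB, Set.mem_inter_iff, Set.mem_setOf_eq]
    constructor
    · rintro ⟨⟨h1, _⟩, hy⟩; exact ⟨h1, hy⟩
    · rintro ⟨h1, hy⟩
      refine ⟨⟨h1, ?_⟩, hy⟩
      nlinarith [mul_nonneg hcpos.le (neg_nonneg.mpr hy)]
  have hflipA : μ2 (A ∩ {p : ℝ × ℝ | p.2 ≤ 0}) = μ2 (A ∩ {p : ℝ × ℝ | 0 ≤ p.2}) := by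
    have hrot := rot_inv 1 0 0 (-1) (by norm_num) (by norm_num) (by norm_num)
      (mA.inter m2)
    have hset : (fun p : ℝ × ℝ => (1 * p.1 + 0 * p.2, 0 * p.1 + -1 * p.2)) ⁻¹'
        (A ∩ {p : ℝ × ℝ | p.2 ≤ 0}) = A ∩ {p : ℝ × ℝ | 0 ≤ p.2} := by
      ext ⟨x, y⟩
      simp only [Set.mem_preimage, Set.mem_inter_iff, Set.mem_setOf_eq, hA]
      constructor
      · rintro ⟨⟨h1, h2⟩, hy⟩
        exact ⟨⟨by linarith, by linarith⟩, by linarith⟩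
      · rintro ⟨⟨h1, h2⟩, hy⟩
        exact ⟨⟨by linarith, by linarith⟩, by linarith⟩
    show (gaussianReal 0 1).prod (gaussianReal 0 1) _ = (gaussianReal 0 1).prod (gaussianReal 0 1) _
    rw [← hrot, hset]
  have hflipB : μ2 (B ∩ {p : ℝ × ℝ | 0 ≤ p.2}) = μ2 (B ∩ {p : ℝ × ℝ | p.2 ≤ 0}) := by
    have hrot := rot_inv 1 0 0 (-1) (by norm_num) (by norm_num) (by norm_num)
      (mB.inter m2')
    have hset : (fun p : ℝ × ℝ => (1 * p.1 + 0 * p.2, 0 * p.1 + -1 * p.2)) ⁻¹'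
        (B ∩ {p : ℝ × ℝ | 0 ≤ p.2}) = B ∩ {p : ℝ × ℝ | p.2 ≤ 0} := by
      ext ⟨x, y⟩
      simp only [Set.mem_preimage, Set.mem_inter_iff, Set.mem_setOf_eq, hB]
      constructor
      · rintro ⟨⟨h1, h2⟩, hy⟩
        exact ⟨⟨by linarith, by linarith⟩, by linarith⟩
      · rintro ⟨⟨h1, h2⟩, hy⟩
        exact ⟨⟨by linarith, by linarith⟩, by linarith⟩
    show (gaussianReal 0 1).prod (gaussianReal 0 1) _ = (gaussianReal 0 1).prod (gaussianReal 0 1) _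
    rw [← hrot, hset]
  have hnull : μ2 {p : ℝ × ℝ | p.2 = 0} = 0 := null_y0
  have hsplitA : μ2 A = μ2 Ap + μ2 Ap := by
    have hunion : (A ∩ {p : ℝ × ℝ | 0 ≤ p.2}) ∪ (A ∩ {p : ℝ × ℝ | p.2 ≤ 0}) = A := by
      ext p
      simp only [Set.mem_union, Set.mem_inter_iff, Set.mem_setOf_eq]
      constructor
      · rintro (⟨hp, _⟩ | ⟨hp, _⟩) <;> exact hp
      · intro hp
        rcases le_total 0 p.2 with hy | hy
        · exact Or.inl ⟨hp, hy⟩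
        · exact Or.inr ⟨hp, hy⟩
    have hint0 : μ2 ((A ∩ {p : ℝ × ℝ | 0 ≤ p.2}) ∩ (A ∩ {p : ℝ × ℝ | p.2 ≤ 0})) = 0 :=
      measure_mono_null (fun p hp => le_antisymm hp.2.2 hp.1.2) hnull
    have hkey := measure_union_add_inter (μ := μ2) (A ∩ {p : ℝ × ℝ | 0 ≤ p.2}) (mA.inter m2)
    rw [hunion, hint0, add_zero, hflipA, hApA] at hkey
    exact hkey
  have hsplitB : μ2 B = μ2 Bm + μ2 Bm := by
    have hunion : (B ∩ {p : ℝ × ℝ | 0 ≤ p.2}) ∪ (B ∩ {p : ℝ × ℝ | p.2 ≤ 0}) = B := by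
      ext p
      simp only [Set.mem_union, Set.mem_inter_iff, Set.mem_setOf_eq]
      constructor
      · rintro (⟨hp, _⟩ | ⟨hp, _⟩) <;> exact hp
      · intro hp
        rcases le_total 0 p.2 with hy | hy
        · exact Or.inl ⟨hp, hy⟩
        · exact Or.inr ⟨hp, hy⟩
    have hint0 : μ2 ((B ∩ {p : ℝ × ℝ | 0 ≤ p.2}) ∩ (B ∩ {p : ℝ × ℝ | p.2 ≤ 0})) = 0 :=
      measure_mono_null (fun p hp => le_antisymm hp.2.2 hp.1.2) hnull
    have hkey := measure_union_add_inter (μ := μ2) (B ∩ {p : ℝ × ℝ | 0 ≤ p.2}) (mB.inter m2)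
    rw [hunion, hint0, add_zero, hflipB, hBmB] at hkey
    exact hkey
  -- step 5 : μ2 Q = μ2 Ap + μ2 Bm
  have h8 : ∀ y : ℝ, (c ^ 2 + s ^ 2) * y = y := fun y => by rw [hcs1]; ring
  have step5 : μ2 Q = μ2 Ap + μ2 Bm := by
    have hrot := rot_inv c (-s) s c (by linarith) (by nlinarith) (by ring) mQ
    have hset : (fun p : ℝ × ℝ => (c * p.1 + -s * p.2, s * p.1 + c * p.2)) ⁻¹' Q
        = Ap ∪ Bm := by
      ext ⟨x, y⟩
      simp only [Set.mem_preimage, Set.mem_union, Set.mem_setOf_eq, hQ, hAp, hBm]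
      constructor
      · rintro ⟨h1, h2⟩
        rcases le_total 0 y with hy | hy
        · exact Or.inl ⟨by linarith, hy⟩
        · exact Or.inr ⟨h2, hy⟩
      · rintro (⟨h1, hy⟩ | ⟨h1, hy⟩)
        · refine ⟨by linarith, ?_⟩
          have h5 : s * h ≤ s * (c * x - s * y) := mul_le_mul_of_nonneg_left h1 hspos.le
          have h7 : c * (θ * h) ≤ c * (s * x + c * y) := by
            rw [show c * (θ * h) = s * h by rw [← hθc]; ring]
            nlinarith [h5, hy, h8 y]
          exact le_of_mul_le_mul_left h7 hcpos
        · refine ⟨?_, by linarith⟩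
          have h5 : c * (θ * h) ≤ c * (s * x + c * y) := mul_le_mul_of_nonneg_left h1 hcpos.le
          have h5' : s * h ≤ c * (s * x + c * y) := by
            rw [show s * h = c * (θ * h) by rw [← hθc]; ring]; exact h5
          have h7 : s * h ≤ s * (c * x + -s * y) := by nlinarith [h5', hy, h8 y]
          exact le_of_mul_le_mul_left h7 hspos
    have hint0 : μ2 (Ap ∩ Bm) = 0 :=
      measure_mono_null (fun p hp => le_antisymm hp.2.2 hp.1.2) hnull
    have hkey := measure_union_add_inter (μ := μ2) Ap mBm
    rw [hint0, add_zero] at hkey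
    rw [← hkey, ← hset]
    show (gaussianReal 0 1).prod (gaussianReal 0 1) Q = (gaussianReal 0 1).prod (gaussianReal 0 1) _
    exact hrot.symm
  -- step 6
  have step6 : μ2 Q = gaussianReal 0 1 (Set.Iic (-h)) * gaussianReal 0 1 (Set.Iic (-(θ * h))) := by
    have hQprod : Q = Set.Ici h ×ˢ Set.Ici (θ * h) := by
      ext ⟨x, y⟩
      simp [hQ, Set.mem_prod]
    show (gaussianReal 0 1).prod (gaussianReal 0 1) Q = _
    rw [hQprod, Measure.prod_prod, gauss_Ici_eq, gauss_Ici_eq]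
  -- finish
  have finAp : μ2 Ap ≠ ⊤ := by
    show (gaussianReal 0 1).prod (gaussianReal 0 1) Ap ≠ ⊤
    exact measure_ne_top _ _
  have finBm : μ2 Bm ≠ ⊤ := by
    show (gaussianReal 0 1).prod (gaussianReal 0 1) Bm ≠ ⊤
    exact measure_ne_top _ _
  have e3 : μ2 Ap + μ2 Bm
      = gaussianReal 0 1 (Set.Iic (-h)) * gaussianReal 0 1 (Set.Iic (-(θ * h))) := by
    rw [← step5, step6]
  show (μ2 E1).toReal
      = 2 * (gaussianReal 0 1 (Set.Iic (-h))).toReal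
          * (gaussianReal 0 1 (Set.Iic (-(θ * h)))).toReal - (μ2 E2).toReal
  have h1R : (μ2 E1).toReal = (μ2 Ap).toReal + (μ2 Ap).toReal := by
    rw [step1, hsplitA, ENNReal.toReal_add finAp finAp]
  have h2R : (μ2 E2).toReal = (μ2 Bm).toReal + (μ2 Bm).toReal := by
    rw [step2, hsplitB, ENNReal.toReal_add finBm finBm]
  have h3R : (μ2 Ap).toReal + (μ2 Bm).toReal
      = (gaussianReal 0 1 (Set.Iic (-h))).toReal
          * (gaussianReal 0 1 (Set.Iic (-(θ * h)))).toReal := by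
    rw [← ENNReal.toReal_mul, ← e3, ENNReal.toReal_add finAp finBm]
  rw [h1R, h2R]
  linarith [h3R]
end
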